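/- arXiv:1901.05806 — 5 statements merged into one kernel-verified Lean document; each statement's English description precedes it below -/
import Mathlib

section
/- Let r and d be natural numbers with r ≥ 2 and d ≥ 2, let S be the free solvable group of rank r and derived length d, and let H be a subgroup of S generated by two elements (H = Subgroup.closure {g, f} for some g, f ∈ S). Then H is algebraically closed in S if and only if H is a retract of S. -/
/-!
A retraction `φ : G →* G` onto `H` carries any solution of a system of equations over `H` in `G`
into `H`. Conversely, let `G` be relatively free on the images of the generators of a free group
`F`, in the sense that every homomorphism `F →* G` factors through `G`; the free solvable groups
are relatively free because `derivedSeries F d` is killed by every homomorphism into a group of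
derived length `d`. If `H` is generated by `π (w₁), …, π (wₘ)`, the system `wᵢ(x) = π (wᵢ)` is
solved in `G` by the generators themselves; a solution `θ : F →* H` in `H` factors through `G`
to a retraction onto `H`.
-/

instance derivedSeriesNormal (G : Type*) [Group G] (n : ℕ) :
    (derivedSeries G n).Normal :=
  derivedSeries_normal G n

/-- A subgroup `H` of a group `G` is algebraically closed in `G`. -/
def IsAlgebraicallyClosed {G : Type*} [Group G] (H : Subgroup G) : Prop :=
  ∀ (n m : ℕ) (E : Fin m → Monoid.Coprod (FreeGroup (Fin n)) H),
    (∃ ψ : Monoid.Coprod (FreeGroup (Fin n)) H →* G,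
      ψ.comp Monoid.Coprod.inr = H.subtype ∧ ∀ i, ψ (E i) = 1) →
    ∃ ψ' : Monoid.Coprod (FreeGroup (Fin n)) H →* G,
      ψ'.comp Monoid.Coprod.inr = H.subtype ∧ (∀ i, ψ' (E i) = 1) ∧
      ψ'.range ≤ H

/-- A subgroup `H` of a group `G` is a retract of `G`. -/
def IsRetract {G : Type*} [Group G] (H : Subgroup G) : Prop :=
  ∃ φ : G →* G, (∀ x ∈ H, φ x = x) ∧ ∀ y, φ y ∈ H

theorem IsRetract.isAlgebraicallyClosed {G : Type*} [Group G] {H : Subgroup G}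
    (hH : IsRetract H) : IsAlgebraicallyClosed H := by
  obtain ⟨φ, hfix, hmem⟩ := hH
  rintro n m E ⟨ψ, hψ, hE⟩
  refine ⟨φ.comp ψ, ?_, fun i => by simp [hE i], ?_⟩
  · ext h
    simp [← MonoidHom.comp_apply ψ, hψ, hfix _ h.2]
  · rintro _ ⟨x, rfl⟩
    exact hmem _

namespace IsAlgebraicallyClosed

variable {G : Type*} [Group G] {H : Subgroup G}

theorem exists_solution_of_mem {n m : ℕ} (hH : IsAlgebraicallyClosed H)
    (π : FreeGroup (Fin n) →* G) (w : Fin m → FreeGroup (Fin n)) (hw : ∀ i, π (w i) ∈ H) :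
    ∃ θ : FreeGroup (Fin n) →* G, θ.range ≤ H ∧ ∀ i, θ (w i) = π (w i) := by
  let E : Fin m → Monoid.Coprod (FreeGroup (Fin n)) H := fun i =>
    Monoid.Coprod.inl (w i) * (Monoid.Coprod.inr ⟨π (w i), hw i⟩)⁻¹
  have hsolved : Monoid.Coprod.lift π H.subtype ∘ E = 1 := by
    ext i
    simp [E]
  obtain ⟨ψ, hψ, hE, hrange⟩ :=
    hH n m E ⟨_, Monoid.Coprod.lift_comp_inr _ _, congrFun hsolved⟩
  refine ⟨ψ.comp Monoid.Coprod.inl, ?_, fun i => ?_⟩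
  · rintro _ ⟨x, rfl⟩
    exact hrange ⟨_, rfl⟩
  · have hinr : ψ (Monoid.Coprod.inr ⟨π (w i), hw i⟩) = π (w i) :=
      DFunLike.congr_fun hψ _
    simpa [E, mul_inv_eq_one, hinr] using hE i

theorem isRetract {n m : ℕ} (hH : IsAlgebraicallyClosed H) {π : FreeGroup (Fin n) →* G}
    (hπ : Function.Surjective π) (hfree : ∀ θ : FreeGroup (Fin n) →* G, π.ker ≤ θ.ker)
    (v : Fin m → G) (hv : H = Subgroup.closure (Set.range v)) : IsRetract H := by
  choose w hw using fun i => hπ (v i)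
  obtain ⟨θ, hθH, hθw⟩ :=
    hH.exists_solution_of_mem π w fun i => hv ▸ hw i ▸ Subgroup.subset_closure ⟨i, rfl⟩
  let φ := π.liftOfRightInverse _ (Function.rightInverse_surjInv hπ) ⟨θ, hfree θ⟩
  have hφπ (x : FreeGroup (Fin n)) : φ (π x) = θ x :=
    π.liftOfRightInverse_comp_apply _ _ ⟨θ, hfree θ⟩ x
  refine ⟨φ, fun x hx => ?_, fun y => ?_⟩
  · have hfix : Set.EqOn φ (MonoidHom.id G) (Set.range v) := by
      rintro _ ⟨i, rfl⟩
      rw [← hw i, hφπ, hθw, MonoidHom.id_apply]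
    exact MonoidHom.eqOn_closure hfix (hv ▸ hx)
  · obtain ⟨x, rfl⟩ := hπ y
    exact hφπ x ▸ hθH ⟨x, rfl⟩

end IsAlgebraicallyClosed

theorem derivedSeries_le_ker {G G' : Type*} [Group G] [Group G'] {n : ℕ}
    (h : derivedSeries G' n = ⊥) (θ : G →* G') : derivedSeries G n ≤ θ.ker :=
  (Subgroup.map_eq_bot_iff _).mp (le_bot_iff.mp (h ▸ map_derivedSeries_le_derivedSeries θ n))

theorem derivedSeries_quotient_derivedSeries (G : Type*) [Group G] (n : ℕ) :
    derivedSeries (G ⧸ derivedSeries G n) n = ⊥ :=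
  (map_derivedSeries_eq (QuotientGroup.mk'_surjective _) n).symm.trans
    ((Subgroup.map_eq_bot_iff _).mpr (QuotientGroup.ker_mk' _).ge)

theorem two_generated_algebraically_closed_iff_retract_free_solvable_general
    (r d : ℕ)
    (g f : FreeGroup (Fin r) ⧸ derivedSeries (FreeGroup (Fin r)) d)
    (H : Subgroup (FreeGroup (Fin r) ⧸ derivedSeries (FreeGroup (Fin r)) d))
    (hH : H = Subgroup.closure {g, f}) :
    IsAlgebraicallyClosed H ↔ IsRetract H := by
  refine ⟨fun hac => hac.isRetract (QuotientGroup.mk'_surjective _) (fun θ => ?_) ![g, f] ?_,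
    IsRetract.isAlgebraicallyClosed⟩
  · rw [QuotientGroup.ker_mk']
    exact derivedSeries_le_ker (derivedSeries_quotient_derivedSeries _ d) θ
  · rw [hH, Matrix.range_cons_cons_empty]

theorem two_generated_algebraically_closed_iff_retract_free_solvable
    (r d : ℕ) (hr : 2 ≤ r) (hd : 2 ≤ d)
    (g f : FreeGroup (Fin r) ⧸ derivedSeries (FreeGroup (Fin r)) d)
    (H : Subgroup (FreeGroup (Fin r) ⧸ derivedSeries (FreeGroup (Fin r)) d))
    (hH : H = Subgroup.closure {g, f}) :
    IsAlgebraicallyClosed H ↔ IsRetract H :=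
  two_generated_algebraically_closed_iff_retract_free_solvable_general r d g f H hH
end

section
/- Let r and d be natural numbers with r ≥ 1 and d ≥ 1, let S be the free solvable group of rank r and derived length d, let h ∈ S be a nontrivial element, and let H = Subgroup.zpowers h be the cyclic subgroup generated by h. Then H is verbally closed in S if and only if H is a retract of S. -/
/-- A subgroup `H` of a group `G` is verbally closed. -/
def IsVerballyClosed {G : Type*} [Group G] (H : Subgroup G) : Prop :=
  ∀ (n : ℕ) (w : FreeGroup (Fin n)) (h : G), h ∈ H →
    (∃ g : Fin n → G, FreeGroup.lift g w = h) →
    ∃ a : Fin n → H, FreeGroup.lift (fun i => (a i : G)) w = h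

/-!
A retraction `φ` onto `H` moves any solution of `w = h` into `H` without changing its value,
so retracts are verbally closed. Conversely, the argument works in every relatively free group
`S = F(x₁, …, x_r) ⧸ N`, `N` fully invariant (as the terms of the derived series are): `h` is the
value of one of its representative words `w` at the basis, so verbal closedness yields
`a₁, …, a_r ∈ ⟨h⟩` with `w(a) = h`. Full invariance of `N` extends `xᵢ ↦ aᵢ` to an endomorphism
of `S`; it fixes `h`, hence `⟨h⟩`, and its image is generated by the `aᵢ`, hence lies in `⟨h⟩`.
-/

open Subgroup

theorem IsRetract.isVerballyClosed {G : Type*} [Group G] {H : Subgroup G} (hH : IsRetract H) :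
    IsVerballyClosed H := by
  obtain ⟨φ, hfix, hmem⟩ := hH
  rintro n w _ hx ⟨g, rfl⟩
  refine ⟨fun i => ⟨φ (g i), hmem (g i)⟩, ?_⟩
  calc FreeGroup.lift (fun i => φ (g i)) w = φ (FreeGroup.lift g w) :=
        (FreeGroup.lift_unique (φ.comp (FreeGroup.lift g)) fun i => by simp).symm
    _ = FreeGroup.lift g w := hfix _ hx

theorem isRetract_zpowers_of_map_eq {G : Type*} [Group G] {h : G} (φ : G →* G) (hφ : φ h = h)
    (hrange : ∀ y, φ y ∈ zpowers h) : IsRetract (zpowers h) := by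
  refine ⟨φ, fun x hx => ?_, hrange⟩
  obtain ⟨k, rfl⟩ := mem_zpowers_iff.mp hx
  rw [map_zpow, hφ]

section RelativelyFree

variable {α : Type*} {N : Subgroup (FreeGroup α)} [N.Normal]

theorem FreeGroup.lift_mk_of (x : FreeGroup α) :
    FreeGroup.lift (fun i => (FreeGroup.of i : FreeGroup α ⧸ N)) x = x :=
  (FreeGroup.lift_unique (QuotientGroup.mk' N) fun _ => rfl).symm

theorem exists_endomorphism_mk_eq_lift (hN : ∀ f : FreeGroup α →* FreeGroup α, N.map f ≤ N)
    (a : α → FreeGroup α ⧸ N) :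
    ∃ φ : FreeGroup α ⧸ N →* FreeGroup α ⧸ N, ∀ x : FreeGroup α, φ x = FreeGroup.lift a x := by
  choose b hb using fun i => QuotientGroup.mk_surjective (a i)
  refine ⟨QuotientGroup.map N N (FreeGroup.lift b) (map_le_iff_le_comap.mp (hN _)), fun x => ?_⟩
  rw [QuotientGroup.map_mk]
  exact FreeGroup.lift_unique ((QuotientGroup.mk' N).comp (FreeGroup.lift b)) fun i => by
    simp [hb]

theorem isRetract_zpowers_of_isVerballyClosed {r : ℕ} {N : Subgroup (FreeGroup (Fin r))}
    [N.Normal] (hN : ∀ f : FreeGroup (Fin r) →* FreeGroup (Fin r), N.map f ≤ N)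
    {h : FreeGroup (Fin r) ⧸ N} (hvc : IsVerballyClosed (zpowers h)) :
    IsRetract (zpowers h) := by
  obtain ⟨w, rfl⟩ := QuotientGroup.mk_surjective h
  obtain ⟨a, ha⟩ := hvc r w _ (mem_zpowers _) ⟨_, FreeGroup.lift_mk_of w⟩
  obtain ⟨φ, hφ⟩ := exists_endomorphism_mk_eq_lift hN fun i => (a i : FreeGroup (Fin r) ⧸ N)
  refine isRetract_zpowers_of_map_eq φ ((hφ w).trans ha) fun y => ?_
  obtain ⟨y, rfl⟩ := QuotientGroup.mk_surjective y
  rw [hφ]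
  exact FreeGroup.range_lift_le (Set.range_subset_iff.mpr fun i => (a i).2) ⟨y, rfl⟩

end RelativelyFree

theorem cyclic_verbally_closed_iff_retract_free_solvable_general
    (r d : ℕ)
    (h : FreeGroup (Fin r) ⧸ derivedSeries (FreeGroup (Fin r)) d) :
    IsVerballyClosed (Subgroup.zpowers h) ↔ IsRetract (Subgroup.zpowers h) :=
  ⟨isRetract_zpowers_of_isVerballyClosed fun f => map_derivedSeries_le_derivedSeries f d,
    IsRetract.isVerballyClosed⟩

theorem cyclic_verbally_closed_iff_retract_free_solvable
    (r d : ℕ) (hr : 1 ≤ r) (hd : 1 ≤ d)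
    (h : FreeGroup (Fin r) ⧸ derivedSeries (FreeGroup (Fin r)) d)
    (hne : h ≠ 1) :
    IsVerballyClosed (Subgroup.zpowers h) ↔ IsRetract (Subgroup.zpowers h) :=
  cyclic_verbally_closed_iff_retract_free_solvable_general r d h
end

section
/- Let r and d be natural numbers with r ≥ 1 and d ≥ 1, let S be the free solvable group of rank r and derived length d, let h ∈ S be a nontrivial element, and let H = Subgroup.zpowers h be the cyclic subgroup generated by h. Then H is a retract of S if and only if the image of h in the abelianization of S is primitive, i.e., if and only if there exists a group homomorphism χ : S →* Multiplicative ℤ with χ h = Multiplicative.ofAdd 1. -/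
instance FreeAbelianGroup.instIsAddTorsionFree (α : Type*) :
    IsAddTorsionFree (FreeAbelianGroup α) :=
  (FreeAbelianGroup.equivFinsupp α).injective.isAddTorsionFree
    (FreeAbelianGroup.equivFinsupp α).toAddMonoidHom

instance Abelianization.instIsMulTorsionFreeFreeGroup (α : Type*) :
    IsMulTorsionFree (Abelianization (FreeGroup α)) :=
  inferInstanceAs (IsMulTorsionFree (Multiplicative (FreeAbelianGroup α)))

section

variable {G : Type*} [Group G] {h : G}

theorem isRetract_zpowers_of_map_eq_ofAdd_one (χ : G →* Multiplicative ℤ)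
    (hχ : χ h = Multiplicative.ofAdd 1) : IsRetract (Subgroup.zpowers h) := by
  refine ⟨(zpowersHom G h).comp χ, ?_, fun y => ⟨(χ y).toAdd, rfl⟩⟩
  rintro _ ⟨n, rfl⟩
  simp [hχ]

open scoped IsMulCommutative in
theorem IsRetract.notMem_commutator_zpowers (hR : IsRetract (Subgroup.zpowers h))
    (hne : h ≠ 1) : h ∉ commutator G := by
  obtain ⟨φ, hfix, hmem⟩ := hR
  intro hc
  have hφh : φ.codRestrict _ hmem h = 1 := Abelianization.commutator_subset_ker _ hc
  exact hne (by simpa [hfix h (Subgroup.mem_zpowers h)] using congrArg Subtype.val hφh)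

theorem IsRetract.exists_map_eq_ofAdd_one (hR : IsRetract (Subgroup.zpowers h))
    (hh : ¬IsOfFinOrder h) : ∃ χ : G →* Multiplicative ℤ, χ h = Multiplicative.ofAdd 1 := by
  obtain ⟨φ, hfix, hmem⟩ := hR
  rw [← Subgroup.range_zpowersHom] at hmem
  let e := MonoidHom.ofInjective (f := zpowersHom G h)
    (injective_zpow_iff_not_isOfFinOrder.mpr hh)
  refine ⟨e.symm.toMonoidHom.comp (φ.codRestrict _ hmem), e.symm_apply_eq.mpr (Subtype.ext ?_)⟩
  show φ h = zpowersHom G h (Multiplicative.ofAdd 1)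
  simpa using hfix h (Subgroup.mem_zpowers h)

theorem not_isOfFinOrder_of_notMem_commutator {A : Type*} [Group A] [IsMulTorsionFree A]
    (f : G →* A) (hf : f.ker ≤ commutator G) (hh : h ∉ commutator G) : ¬IsOfFinOrder h :=
  fun hfin => not_isOfFinOrder_of_isMulTorsionFree (fun h1 => hh (hf h1)) (f.isOfFinOrder hfin)

theorem QuotientGroup.ker_lift_of_le_commutator {N : Subgroup G} [N.Normal]
    (hN : N ≤ commutator G) :
    (lift N Abelianization.of fun _ hx => (Abelianization.ker_of G).ge (hN hx)).ker ≤
      commutator (G ⧸ N) := by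
  intro x hx
  obtain ⟨x, rfl⟩ := mk_surjective x
  rw [MonoidHom.mem_ker, lift_mk, ← MonoidHom.mem_ker, Abelianization.ker_of] at hx
  rw [commutator_def, ← Subgroup.map_top_of_surjective _ (mk'_surjective N),
    ← Subgroup.map_commutator]
  exact Subgroup.mem_map_of_mem _ hx

end

theorem cyclic_retract_iff_primitive_in_abelianization_general
    (r d : ℕ) (hd : 1 ≤ d)
    (h : FreeGroup (Fin r) ⧸ derivedSeries (FreeGroup (Fin r)) d)
    (hne : h ≠ 1) :
    IsRetract (Subgroup.zpowers h) ↔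
      ∃ χ : (FreeGroup (Fin r) ⧸ derivedSeries (FreeGroup (Fin r)) d) →*
        Multiplicative ℤ, χ h = Multiplicative.ofAdd 1 := by
  refine ⟨fun hR => hR.exists_map_eq_ofAdd_one ?_,
    fun ⟨χ, hχ⟩ => isRetract_zpowers_of_map_eq_ofAdd_one χ hχ⟩
  have hN : derivedSeries (FreeGroup (Fin r)) d ≤ commutator (FreeGroup (Fin r)) :=
    derivedSeries_one (FreeGroup (Fin r)) ▸ derivedSeries_antitone _ hd
  exact not_isOfFinOrder_of_notMem_commutator _ (QuotientGroup.ker_lift_of_le_commutator hN)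
    (hR.notMem_commutator_zpowers hne)

theorem cyclic_retract_iff_primitive_in_abelianization
    (r d : ℕ) (hr : 1 ≤ r) (hd : 1 ≤ d)
    (h : FreeGroup (Fin r) ⧸ derivedSeries (FreeGroup (Fin r)) d)
    (hne : h ≠ 1) :
    IsRetract (Subgroup.zpowers h) ↔
      ∃ χ : (FreeGroup (Fin r) ⧸ derivedSeries (FreeGroup (Fin r)) d) →*
        Multiplicative ℤ, χ h = Multiplicative.ofAdd 1 :=
  cyclic_retract_iff_primitive_in_abelianization_general r d hd h hne
end

section
/- Let G be a group, let W be a set of elements of FreeGroup ℕ, and let N be the verbal subgroup of G determined by W, namely N = Subgroup.normalClosure {x : G | ∃ w ∈ W, ∃ g : ℕ → G, FreeGroup.lift g w = x}. If H is a verbally closed subgroup of G, then the image of H under the quotient map G →* G ⧸ N is a verbally closed subgroup of G ⧸ N. -/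
namespace FreeGroup

variable {ι κ G : Type*} [Group G]

theorem lift_map (f : ι → κ) (g : κ → G) (w : FreeGroup ι) :
    lift g (map f w) = lift (g ∘ f) w := by
  induction w using FreeGroup.induction_on <;> simp_all

theorem exists_finset_mem_range_map (w : FreeGroup ι) :
    ∃ s : Finset ι, w ∈ (map ((↑) : s → ι)).range := by
  classical
  simp only [range_map, Subtype.range_coe_subtype, Finset.setOfPred_mem]
  induction w using FreeGroup.induction_on with
  | C1 => exact ⟨∅, one_mem _⟩
  | of x => exact ⟨{x}, Subgroup.subset_closure ⟨x, by simp, rfl⟩⟩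
  | inv_of x hx => exact hx.imp fun _ => inv_mem
  | mul x y hx hy =>
    obtain ⟨s, hs⟩ := hx
    obtain ⟨t, ht⟩ := hy
    have mono {s t : Finset ι} (hst : s ⊆ t) :
        Subgroup.closure (of '' (s : Set ι)) ≤ Subgroup.closure (of '' (t : Set ι)) :=
      Subgroup.closure_mono (Set.image_mono (Finset.coe_subset.2 hst))
    exact ⟨s ∪ t, mul_mem (mono Finset.subset_union_left hs) (mono Finset.subset_union_right ht)⟩

end FreeGroup

theorem MonoidHom.map_freeGroupLift {ι G K : Type*} [Group G] [Group K] (φ : G →* K)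
    (g : ι → G) (w : FreeGroup ι) : φ (FreeGroup.lift g w) = FreeGroup.lift (φ ∘ g) w :=
  FreeGroup.lift_unique (φ.comp (FreeGroup.lift g)) (by simp)

open FreeGroup (lift)

namespace IsVerballyClosed

variable {G : Type*} [Group G] {H : Subgroup G} {ι : Type*}

theorem exists_lift_eq_of_finite [Finite ι] (hH : IsVerballyClosed H) (w : FreeGroup ι)
    {h : G} (hh : h ∈ H) {g : ι → G} (hg : lift g w = h) :
    ∃ a : ι → H, lift (fun i => (a i : G)) w = h := by
  obtain ⟨n, ⟨e⟩⟩ := Finite.exists_equiv_fin ι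
  obtain ⟨a, ha⟩ := hH n (FreeGroup.map e w) h hh
    ⟨g ∘ e.symm, by simpa [FreeGroup.lift_map, Function.comp_def]⟩
  exact ⟨a ∘ e, by rwa [FreeGroup.lift_map] at ha⟩

theorem exists_lift_eq (hH : IsVerballyClosed H) (w : FreeGroup ι)
    {h : G} (hh : h ∈ H) {g : ι → G} (hg : lift g w = h) :
    ∃ a : ι → H, lift (fun i => (a i : G)) w = h := by
  classical
  obtain ⟨s, v, rfl⟩ := FreeGroup.exists_finset_mem_range_map w
  rw [FreeGroup.lift_map] at hg
  obtain ⟨a, ha⟩ := hH.exists_lift_eq_of_finite v hh hg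
  refine ⟨fun i => if hi : i ∈ s then a ⟨i, hi⟩ else 1, ?_⟩
  rw [FreeGroup.lift_map, ← ha]
  congr 2
  funext i
  simp

end IsVerballyClosed

section LawsModulo

variable {G : Type*} [Group G]

def IsLawModulo (N : Subgroup G) {ι : Type*} (u : FreeGroup ι) : Prop :=
  ∀ b : ι → G, lift b u ∈ N

def Subgroup.valuesOfLawsModulo (N : Subgroup G) : Subgroup G where
  carrier := {x | ∃ (ι : Type) (u : FreeGroup ι), IsLawModulo N u ∧ ∃ g, lift g u = x}
  one_mem' := ⟨Empty, 1, fun _ => by simp [one_mem], isEmptyElim, map_one _⟩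
  mul_mem' := by
    rintro _ _ ⟨ι, u, hu, g, rfl⟩ ⟨κ, v, hv, g', rfl⟩
    refine ⟨ι ⊕ κ, FreeGroup.map Sum.inl u * FreeGroup.map Sum.inr v, fun b => ?_,
      Sum.elim g g', ?_⟩
    · simpa [FreeGroup.lift_map] using mul_mem (hu _) (hv _)
    · simp [FreeGroup.lift_map]
  inv_mem' := by
    rintro _ ⟨ι, u, hu, g, rfl⟩
    exact ⟨ι, u⁻¹, fun b => by simpa using hu b, g, by simp⟩

instance Subgroup.valuesOfLawsModulo_normal (N : Subgroup G) [N.Normal] :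
    (Subgroup.valuesOfLawsModulo N).Normal where
  conj_mem := by
    rintro _ ⟨ι, u, hu, g, rfl⟩ c
    refine ⟨Option ι, FreeGroup.of none * FreeGroup.map some u * (FreeGroup.of none)⁻¹,
      fun b => ?_, fun o => o.elim c g, ?_⟩
    · simpa [FreeGroup.lift_map] using ‹N.Normal›.conj_mem _ (hu (b ∘ some)) (b none)
    · simp [FreeGroup.lift_map, Function.comp_def]

theorem le_valuesOfLawsModulo {W : Set (FreeGroup ℕ)} {N : Subgroup G}
    (hN : N = Subgroup.normalClosure {x : G | ∃ w ∈ W, ∃ g : ℕ → G, lift g w = x}) [N.Normal] :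
    N ≤ Subgroup.valuesOfLawsModulo N := by
  subst hN
  refine Subgroup.normalClosure_le_normal ?_
  rintro _ ⟨w, hw, g, rfl⟩
  exact ⟨ℕ, w, fun b => Subgroup.subset_normalClosure ⟨w, hw, b, rfl⟩, g, rfl⟩

end LawsModulo

theorem image_of_verbally_closed_in_quotient_by_verbal_subgroup
    {G : Type*} [Group G] (W : Set (FreeGroup ℕ))
    (N : Subgroup G)
    (hN : N = Subgroup.normalClosure
      {x : G | ∃ w ∈ W, ∃ g : ℕ → G, FreeGroup.lift g w = x})
    [N.Normal]
    (H : Subgroup G) (hH : IsVerballyClosed H) :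
    IsVerballyClosed (H.map (QuotientGroup.mk' N)) := by
  rintro n w _ hx ⟨q, hq⟩
  obtain ⟨h, hh, rfl⟩ := Subgroup.mem_map.1 hx
  obtain ⟨g, rfl⟩ := (QuotientGroup.mk'_surjective N).comp_left q
  rw [← MonoidHom.map_freeGroupLift] at hq
  have hwg : h⁻¹ * lift g w ∈ N := QuotientGroup.eq.1 hq.symm
  obtain ⟨ι, u, hu, g', hg'⟩ := le_valuesOfLawsModulo hN hwg
  obtain ⟨a, ha⟩ := hH.exists_lift_eq (FreeGroup.map Sum.inl w * (FreeGroup.map Sum.inr u)⁻¹) hh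
    (g := Sum.elim g g') (by simp [FreeGroup.lift_map, hg'])
  refine ⟨fun i => ⟨QuotientGroup.mk' N (a (.inl i)), Subgroup.mem_map_of_mem _ (a _).2⟩, ?_⟩
  have hu' : QuotientGroup.mk' N (lift ((fun i => (a i : G)) ∘ Sum.inr) u) = 1 :=
    (QuotientGroup.eq_one_iff _).2 (hu _)
  calc lift (fun i => QuotientGroup.mk' N (a (.inl i))) w
      = QuotientGroup.mk' N (lift (fun i => (a (.inl i) : G)) w) :=
        (MonoidHom.map_freeGroupLift _ _ _).symm
    _ = QuotientGroup.mk' N (lift (fun i => (a i : G))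
          (FreeGroup.map Sum.inl w * (FreeGroup.map Sum.inr u)⁻¹)) := by
        rw [map_mul, map_inv, FreeGroup.lift_map, FreeGroup.lift_map, map_mul, map_inv, hu',
          inv_one, mul_one]
        rfl
    _ = QuotientGroup.mk' N h := by rw [ha]
end

section
/- Let r and d be natural numbers with r ≥ 2 and d ≥ 2, and let S be the free solvable group of rank r and derived length d. For every nontrivial element y of the (d−1)-st term of the derived series of S, the centralizer of y in S equals the (d−1)-st term of the derived series of S: Subgroup.centralizer {y} = derivedSeries S (d-1). -/
open Finsupp Function

set_option linter.unusedSectionVars false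

namespace FSG

variable {r : ℕ} {Q : Type} [Group Q]

/-- free abelian group on edges of Cayley graph -/
abbrev M (r : ℕ) (Q : Type) : Type := (Q × Fin r) →₀ ℤ

/-- action of Q on M by left translation -/
noncomputable def act (q : Q) : M r Q ≃+ M r Q :=
  Finsupp.domCongr ((Equiv.mulLeft q).prodCongr (Equiv.refl _))

lemma act_single (q p : Q) (i : Fin r) (z : ℤ) :
    act q (Finsupp.single (p, i) z) = Finsupp.single (q * p, i) z := by
  simp [act, Finsupp.domCongr_apply, Finsupp.equivMapDomain_single]

lemma act_apply (q : Q) (m : M r Q) (p : Q) (i : Fin r) :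
    act q m (p, i) = m (q⁻¹ * p, i) := by
  simp [act, Finsupp.domCongr_apply, Finsupp.equivMapDomain_apply]

lemma act_one (m : M r Q) : act 1 m = m := by
  ext ⟨p, i⟩; simp [act_apply]

lemma act_mul (q q' : Q) (m : M r Q) : act (q * q') m = act q (act q' m) := by
  ext ⟨p, i⟩; simp [act_apply, mul_assoc]

/-- The wreath-like group: semidirect product M ⋊ Q -/
structure W (r : ℕ) (Q : Type) where
  m : M r Q
  q : Q

namespace W

@[ext] lemma ext {a b : W r Q} (h1 : a.m = b.m) (h2 : a.q = b.q) : a = b := by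
  cases a; cases b; cases h1; cases h2; rfl

noncomputable instance : Mul (W r Q) := ⟨fun a b => ⟨a.m + act a.q b.m, a.q * b.q⟩⟩
instance : One (W r Q) := ⟨⟨0, 1⟩⟩
noncomputable instance : Inv (W r Q) := ⟨fun a => ⟨-(act a.q⁻¹ a.m), a.q⁻¹⟩⟩

lemma mul_def (a b : W r Q) : a * b = ⟨a.m + act a.q b.m, a.q * b.q⟩ := rfl
lemma one_def : (1 : W r Q) = ⟨0, 1⟩ := rfl
lemma inv_def (a : W r Q) : a⁻¹ = ⟨-(act a.q⁻¹ a.m), a.q⁻¹⟩ := rfl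

noncomputable instance : Group (W r Q) where
  mul_assoc a b c := by
    ext <;> simp [mul_def, act_mul, add_assoc, mul_assoc, map_add]
  one_mul a := by ext <;> simp [mul_def, one_def, act_one]
  mul_one a := by ext <;> simp [mul_def, one_def]
  inv_mul_cancel a := by ext <;> simp [mul_def, inv_def, one_def]

/-- projection to Q -/
noncomputable def proj : W r Q →* Q where
  toFun a := a.q
  map_one' := rfl
  map_mul' _ _ := rfl

@[simp] lemma proj_apply (a : W r Q) : proj a = a.q := rfl

end W

section Magnus

variable (π : FreeGroup (Fin r) →* Q)

/-- the Magnus homomorphism into W -/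
noncomputable def psi : FreeGroup (Fin r) →* W r Q :=
  FreeGroup.lift fun i => ⟨Finsupp.single ((1 : Q), i) 1, π (FreeGroup.of i)⟩

lemma psi_of (i : Fin r) :
    psi π (FreeGroup.of i) = ⟨Finsupp.single ((1 : Q), i) 1, π (FreeGroup.of i)⟩ :=
  FreeGroup.lift_apply_of

lemma psi_q (w : FreeGroup (Fin r)) : (psi π w).q = π w := by
  have : (W.proj.comp (psi π)) w = π w := by
    refine DFunLike.congr_fun (FreeGroup.ext_hom _ _ fun i => ?_) w
    simp [psi_of]
  simpa using this

/-- the "Fox derivative" / chain map -/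
noncomputable def mu (w : FreeGroup (Fin r)) : M r Q := (psi π w).m

lemma mu_mul (a b : FreeGroup (Fin r)) :
    mu π (a * b) = mu π a + act (π a) (mu π b) := by
  unfold mu
  rw [map_mul, W.mul_def, psi_q]

lemma mu_one : mu π 1 = 0 := by unfold mu; rw [map_one]; rfl

lemma mu_inv (a : FreeGroup (Fin r)) :
    mu π a⁻¹ = -(act (π a)⁻¹ (mu π a)) := by
  unfold mu
  rw [map_inv, W.inv_def, psi_q]

lemma mu_of (i : Fin r) : mu π (FreeGroup.of i) = Finsupp.single ((1 : Q), i) 1 := by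
  unfold mu; rw [psi_of]

end Magnus


section Tree

variable (π : FreeGroup (Fin r) →* Q) (hπ : Surjective π)

/-- generator or inverse -/
def gen (i : Fin r) (b : Bool) : FreeGroup (Fin r) :=
  if b then FreeGroup.of i else (FreeGroup.of i)⁻¹

lemma mk_single (i : Fin r) (b : Bool) : FreeGroup.mk [(i, b)] = gen i b := by
  cases b with
  | true => rfl
  | false =>
    show _ = (FreeGroup.of i)⁻¹
    rw [show FreeGroup.of i = FreeGroup.mk [(i, true)] from rfl, FreeGroup.inv_mk]
    rfl

include hπ

lemma exists_word (q : Q) :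
    ∃ n : ℕ, ∃ L : List (Fin r × Bool), π (FreeGroup.mk L) = q ∧ L.length = n := by
  obtain ⟨w, hw⟩ := hπ q
  exact ⟨w.toWord.length, w.toWord, by rw [FreeGroup.mk_toWord]; exact hw, rfl⟩

open Classical in
/-- distance to identity in Cayley graph -/
noncomputable def ell (q : Q) : ℕ := Nat.find (exists_word π hπ q)

open Classical in
lemma ell_spec (q : Q) :
    ∃ L : List (Fin r × Bool), π (FreeGroup.mk L) = q ∧ L.length = ell π hπ q :=
  Nat.find_spec (exists_word π hπ q)

open Classical in
lemma ell_le (q : Q) (L : List (Fin r × Bool)) (h : π (FreeGroup.mk L) = q) :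
    ell π hπ q ≤ L.length :=
  Nat.find_le ⟨L, h, rfl⟩

lemma exists_parent (q : Q) (hq : q ≠ 1) :
    ∃ t : Q × Fin r × Bool, t.1 * π (gen t.2.1 t.2.2) = q ∧ ell π hπ t.1 < ell π hπ q := by
  obtain ⟨L, hL, hlen⟩ := ell_spec π hπ q
  have hLne : L ≠ [] := by
    rintro rfl
    rw [← FreeGroup.one_eq_mk, map_one] at hL
    exact hq hL.symm
  have hsplit : L.dropLast ++ [L.getLast hLne] = L := List.dropLast_append_getLast hLne
  have hmul : FreeGroup.mk L = FreeGroup.mk L.dropLast * FreeGroup.mk [L.getLast hLne] := by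
    rw [FreeGroup.mul_mk, hsplit]
  refine ⟨⟨π (FreeGroup.mk L.dropLast), (L.getLast hLne).1, (L.getLast hLne).2⟩, ?_, ?_⟩
  · rw [← mk_single, ← map_mul, ← hmul, hL]
  · show ell π hπ (π (FreeGroup.mk L.dropLast)) < ell π hπ q
    have h1 : ell π hπ (π (FreeGroup.mk L.dropLast)) ≤ L.dropLast.length :=
      ell_le π hπ _ _ rfl
    have h2 : L.dropLast.length < L.length := by
      rw [List.length_dropLast]
      have : 0 < L.length := List.length_pos_iff.mpr hLne
      omega
    omega

/-- parent data for the spanning tree -/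
noncomputable def pdat (q : Q) (hq : q ≠ 1) : Q × Fin r × Bool :=
  (exists_parent π hπ q hq).choose

lemma pdat_mul (q : Q) (hq : q ≠ 1) :
    (pdat π hπ q hq).1 * π (gen (pdat π hπ q hq).2.1 (pdat π hπ q hq).2.2) = q :=
  (exists_parent π hπ q hq).choose_spec.1

lemma pdat_lt (q : Q) (hq : q ≠ 1) :
    ell π hπ (pdat π hπ q hq).1 < ell π hπ q :=
  (exists_parent π hπ q hq).choose_spec.2

open Classical in
/-- the spanning tree transversal -/
noncomputable def T (q : Q) : FreeGroup (Fin r) :=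
  if h : q = 1 then 1
  else T (pdat π hπ q h).1 * gen (pdat π hπ q h).2.1 (pdat π hπ q h).2.2
termination_by ell π hπ q
decreasing_by exact pdat_lt π hπ q h

lemma T_one : T π hπ 1 = 1 := by rw [T]; simp

lemma T_ne (q : Q) (hq : q ≠ 1) :
    T π hπ q = T π hπ (pdat π hπ q hq).1 * gen (pdat π hπ q hq).2.1 (pdat π hπ q hq).2.2 := by
  conv_lhs => rw [T]
  simp [hq]

lemma T_pi (q : Q) : π (T π hπ q) = q := by
  suffices h : ∀ n q, ell π hπ q = n → π (T π hπ q) = q from h _ q rfl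
  intro n
  induction n using Nat.strong_induction_on with
  | _ n ih =>
    intro q hn
    by_cases hq : q = 1
    · subst hq; rw [T_one, map_one]
    · rw [T_ne π hπ q hq, map_mul, ih _ (hn ▸ pdat_lt π hπ q hq) _ rfl, pdat_mul]

/-- Schreier generators -/
noncomputable def sGen (q : Q) (i : Fin r) : FreeGroup (Fin r) :=
  T π hπ q * FreeGroup.of i * (T π hπ (q * π (FreeGroup.of i)))⁻¹

lemma sGen_ker (q : Q) (i : Fin r) : π (sGen π hπ q i) = 1 := by
  simp [sGen, T_pi, mul_assoc]

/-- the subgroup generated by Schreier generators -/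
noncomputable def K : Subgroup (FreeGroup (Fin r)) :=
  Subgroup.closure (Set.range fun e : Q × Fin r => sGen π hπ e.1 e.2)

lemma sGen_mem_K (q : Q) (i : Fin r) : sGen π hπ q i ∈ K π hπ :=
  Subgroup.subset_closure ⟨(q, i), rfl⟩

lemma sGen_tree_pos (q : Q) (i : Fin r) (h : T π hπ (q * π (FreeGroup.of i)) = T π hπ q * FreeGroup.of i) :
    sGen π hπ q i = 1 := by
  rw [sGen, h]; group

lemma sGen_tree_neg (q : Q) (i : Fin r)
    (h : T π hπ (q * (π (FreeGroup.of i))⁻¹) = T π hπ q * (FreeGroup.of i)⁻¹) :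
    sGen π hπ (q * (π (FreeGroup.of i))⁻¹) i = 1 := by
  rw [sGen, h, inv_mul_cancel_right]; group

lemma telescope (w : FreeGroup (Fin r)) :
    ∀ q : Q, T π hπ q * w * (T π hπ (q * π w))⁻¹ ∈ K π hπ := by
  induction w using FreeGroup.induction_on with
  | C1 => intro q; simpa using (K π hπ).one_mem
  | of i => intro q; exact sGen_mem_K π hπ q i
  | inv_of i ih =>
    intro q
    have key : T π hπ q * (FreeGroup.of i)⁻¹ * (T π hπ (q * π (FreeGroup.of i)⁻¹))⁻¹
        = (sGen π hπ (q * (π (FreeGroup.of i))⁻¹) i)⁻¹ := by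
      rw [sGen, map_inv, inv_mul_cancel_right]
      group
    show T π hπ q * (FreeGroup.of i)⁻¹ * (T π hπ (q * π (FreeGroup.of i)⁻¹))⁻¹ ∈ K π hπ
    rw [key]
    exact inv_mem (sGen_mem_K π hπ _ i)
  | mul a b iha ihb =>
    intro q
    have key : T π hπ q * (a * b) * (T π hπ (q * π (a * b)))⁻¹
        = (T π hπ q * a * (T π hπ (q * π a))⁻¹) *
          (T π hπ (q * π a) * b * (T π hπ (q * π a * π b))⁻¹) := by
      rw [map_mul, ← mul_assoc]
      group
    rw [key]
    exact mul_mem (iha q) (ihb (q * π a))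

lemma ker_le_K (w : FreeGroup (Fin r)) (hw : π w = 1) : w ∈ K π hπ := by
  have h := telescope π hπ w 1
  rw [hw, mul_one, T_one] at h
  simpa using h

lemma K_le_ker (w : FreeGroup (Fin r)) (hw : w ∈ K π hπ) : π w = 1 := by
  induction hw using Subgroup.closure_induction with
  | mem x hx => obtain ⟨⟨q, i⟩, rfl⟩ := hx; exact sGen_ker π hπ q i
  | one => exact map_one π
  | mul x y _ _ hx hy => rw [map_mul, hx, hy, mul_one]
  | inv x _ hx => rw [map_inv, hx, inv_one]

/-- mu as a hom on the kernel -/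
noncomputable def nu : π.ker →* Multiplicative (M r Q) where
  toFun x := Multiplicative.ofAdd (mu π x.1)
  map_one' := by
    simp [mu_one]
  map_mul' x y := by
    have hx : π (x : FreeGroup (Fin r)) = 1 := x.2
    show Multiplicative.ofAdd (mu π ((x * y : π.ker) : FreeGroup (Fin r))) = _
    rw [Subgroup.coe_mul, mu_mul, hx, act_one, ofAdd_add]

lemma nu_apply (x : π.ker) : nu π x = Multiplicative.ofAdd (mu π x.1) := rfl

/-- retraction onto the abelianized kernel -/
noncomputable def lam : M r Q →+ Additive (Abelianization π.ker) :=
  Finsupp.liftAddHom fun e =>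
    zmultiplesHom _ (Additive.ofMul (Abelianization.of
      (⟨sGen π hπ e.1 e.2, MonoidHom.mem_ker.mpr (sGen_ker π hπ e.1 e.2)⟩ : π.ker)))

lemma lam_single (q : Q) (i : Fin r) (z : ℤ) :
    lam π hπ (Finsupp.single (q, i) z) =
      z • Additive.ofMul (Abelianization.of
        (⟨sGen π hπ q i, MonoidHom.mem_ker.mpr (sGen_ker π hπ q i)⟩ : π.ker)) := by
  rw [lam, Finsupp.liftAddHom_apply_single, zmultiplesHom_apply]

lemma lam_mu_T (q : Q) : lam π hπ (mu π (T π hπ q)) = 0 := by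
  suffices h : ∀ n q, ell π hπ q = n → lam π hπ (mu π (T π hπ q)) = 0 from h _ q rfl
  intro n
  induction n using Nat.strong_induction_on with
  | _ n ih =>
    intro q hn
    by_cases hq : q = 1
    · subst hq; rw [T_one, mu_one, map_zero]
    · have hmul := pdat_mul π hπ q hq
      have hT := T_ne π hπ q hq
      rw [hT, mu_mul, T_pi, map_add, ih _ (hn ▸ pdat_lt π hπ q hq) _ rfl, zero_add]
      cases hB : (pdat π hπ q hq).2.2 with
      | true =>
        rw [hB] at hmul hT
        have hof : gen (pdat π hπ q hq).2.1 true = FreeGroup.of (pdat π hπ q hq).2.1 := rfl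
        rw [hof] at hmul hT ⊢
        rw [mu_of, act_single, mul_one, lam_single]
        have h1 : sGen π hπ (pdat π hπ q hq).1 (pdat π hπ q hq).2.1 = 1 :=
          sGen_tree_pos π hπ _ _ (by rw [hmul, hT])
        have h2 : (⟨sGen π hπ (pdat π hπ q hq).1 (pdat π hπ q hq).2.1,
            MonoidHom.mem_ker.mpr (sGen_ker π hπ _ _)⟩ : π.ker) = 1 := Subtype.ext h1
        rw [h2, map_one]
        simp
      | false =>
        rw [hB] at hmul hT
        have hof : gen (pdat π hπ q hq).2.1 false = (FreeGroup.of (pdat π hπ q hq).2.1)⁻¹ := rfl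
        rw [hof] at hmul hT ⊢
        rw [map_inv] at hmul
        rw [mu_inv, mu_of, act_single, mul_one, map_neg, act_single, map_neg, lam_single]
        have h1 : sGen π hπ ((pdat π hπ q hq).1 * (π (FreeGroup.of (pdat π hπ q hq).2.1))⁻¹)
            (pdat π hπ q hq).2.1 = 1 :=
          sGen_tree_neg π hπ _ _ (by rw [hmul, hT])
        have h2 : (⟨_, MonoidHom.mem_ker.mpr (sGen_ker π hπ
            ((pdat π hπ q hq).1 * (π (FreeGroup.of (pdat π hπ q hq).2.1))⁻¹)
            (pdat π hπ q hq).2.1)⟩ : π.ker) = 1 := Subtype.ext h1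
        rw [h2, map_one]
        simp

omit hπ in
lemma act_act_inv (q : Q) (m : M r Q) : act q (act q⁻¹ m) = m := by
  rw [← act_mul, mul_inv_cancel, act_one]

lemma mu_sGen (q : Q) (i : Fin r) :
    mu π (sGen π hπ q i) =
      mu π (T π hπ q) + Finsupp.single (q, i) 1 - mu π (T π hπ (q * π (FreeGroup.of i))) := by
  rw [sGen, mu_mul, mu_mul, mu_inv, mu_of, T_pi, T_pi, map_mul, T_pi]
  rw [act_single, mul_one, map_neg, act_act_inv]
  abel

lemma lam_mu_sGen (q : Q) (i : Fin r) :
    lam π hπ (mu π (sGen π hπ q i)) =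
      Additive.ofMul (Abelianization.of
        (⟨sGen π hπ q i, MonoidHom.mem_ker.mpr (sGen_ker π hπ q i)⟩ : π.ker)) := by
  rw [mu_sGen, sub_eq_add_neg, map_add, map_add, map_neg, lam_mu_T π hπ, lam_mu_T π hπ, lam_single]
  simp

/-- lam as a multiplicative hom -/
noncomputable def lamMult : Multiplicative (M r Q) →* Abelianization π.ker where
  toFun m := Additive.toMul (lam π hπ m.toAdd)
  map_one' := by
    show Additive.toMul (lam π hπ 0) = 1
    rw [map_zero]; rfl
  map_mul' x y := by
    show Additive.toMul (lam π hπ (x.toAdd + y.toAdd)) = _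
    rw [map_add]; rfl

lemma lamMult_nu_sGen (q : Q) (i : Fin r) :
    lamMult π hπ (nu π ⟨sGen π hπ q i, MonoidHom.mem_ker.mpr (sGen_ker π hπ q i)⟩) =
      Abelianization.of (⟨sGen π hπ q i, MonoidHom.mem_ker.mpr (sGen_ker π hπ q i)⟩ : π.ker) := by
  show Additive.toMul (lam π hπ (mu π (sGen π hπ q i))) = _
  rw [lam_mu_sGen]
  rfl

lemma retraction (x : π.ker) :
    lamMult π hπ (nu π x) = Abelianization.of x := by
  obtain ⟨w, hw⟩ := x
  have hK : w ∈ K π hπ := ker_le_K π hπ w hw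
  induction hK using Subgroup.closure_induction with
  | mem u hu =>
    obtain ⟨⟨q, i⟩, rfl⟩ := hu
    exact lamMult_nu_sGen π hπ q i
  | one =>
    have : (⟨(1 : FreeGroup (Fin r)), hw⟩ : π.ker) = 1 := rfl
    rw [this, map_one, map_one, map_one]
  | mul u v hu hv ihu ihv =>
    have hu' : u ∈ π.ker := MonoidHom.mem_ker.mpr (K_le_ker π hπ u hu)
    have hv' : v ∈ π.ker := MonoidHom.mem_ker.mpr (K_le_ker π hπ v hv)
    have : (⟨u * v, hw⟩ : π.ker) = ⟨u, hu'⟩ * ⟨v, hv'⟩ := rfl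
    rw [this, map_mul, map_mul, ihu hu', ihv hv', map_mul]
  | inv u hu ihu =>
    have hu' : u ∈ π.ker := MonoidHom.mem_ker.mpr (K_le_ker π hπ u hu)
    have : (⟨u⁻¹, hw⟩ : π.ker) = (⟨u, hu'⟩ : π.ker)⁻¹ := rfl
    rw [this, map_inv, map_inv, ihu hu', map_inv]

/-- The Magnus embedding theorem on the kernel: if the Fox derivative vanishes,
the element is in the second derived subgroup -/
theorem magnus_ker (w : FreeGroup (Fin r)) (hw : w ∈ π.ker) (h0 : mu π w = 0) :
    w ∈ ⁅π.ker, π.ker⁆ := by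
  have h1 : Abelianization.of (⟨w, hw⟩ : π.ker) = 1 := by
    rw [← retraction π hπ ⟨w, hw⟩]
    have : nu π ⟨w, hw⟩ = 1 := by
      show Multiplicative.ofAdd (mu π w) = 1
      rw [h0]; rfl
    rw [this, map_one]
  have h2 : (⟨w, hw⟩ : π.ker) ∈ commutator π.ker := by
    exact (QuotientGroup.eq_one_iff _).mp h1
  have h3 : w ∈ (commutator π.ker).map π.ker.subtype :=
    ⟨⟨w, hw⟩, h2, rfl⟩
  rwa [commutator_def, Subgroup.map_commutator, ← MonoidHom.range_eq_map,
    Subgroup.range_subtype] at h3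

omit hπ in
lemma act_fix_torsion (q : Q) (m : M r Q) (hm : m ≠ 0) (h : act q m = m) :
    ∃ n : ℕ, 0 < n ∧ q ^ n = 1 := by
  have hpt : ∀ p : Q, ∀ i : Fin r, m (q * p, i) = m (p, i) := by
    intro p i
    have h2 : act q m (q * p, i) = m (q * p, i) := by rw [h]
    rw [act_apply, inv_mul_cancel_left] at h2
    exact h2.symm
  have hptn : ∀ n : ℕ, ∀ p : Q, ∀ i : Fin r, m (q ^ n * p, i) = m (p, i) := by
    intro n
    induction n with
    | zero => simp
    | succ n ihn =>
      intro p i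
      rw [pow_succ, mul_assoc, ihn, hpt]
  obtain ⟨⟨p, i⟩, hpi⟩ := Finsupp.support_nonempty_iff.mpr hm
  have hmem : ∀ n : ℕ, ((q ^ n * p, i) : Q × Fin r) ∈ m.support := by
    intro n
    rw [Finsupp.mem_support_iff, hptn]
    exact Finsupp.mem_support_iff.mp hpi
  obtain ⟨n₁, n₂, hne, heq⟩ :=
    Finite.exists_ne_map_eq_of_infinite (fun n : ℕ => (⟨(q ^ n * p, i), hmem n⟩ : m.support))
  have heqp : q ^ n₁ * p = q ^ n₂ * p := by
    have := congrArg (fun x : m.support => x.1.1) heq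
    simpa using this
  have heq' : q ^ n₁ = q ^ n₂ := mul_right_cancel heqp
  rcases Nat.lt_or_ge n₁ n₂ with hlt | hge
  · refine ⟨n₂ - n₁, by omega, ?_⟩
    have : q ^ (n₂ - n₁) * q ^ n₁ = q ^ n₁ := by
      rw [← pow_add]
      rw [show n₂ - n₁ + n₁ = n₂ by omega, ← heq']
    exact mul_right_cancel (by rw [this, one_mul])
  · have hlt : n₂ < n₁ := by omega
    refine ⟨n₁ - n₂, by omega, ?_⟩
    have : q ^ (n₁ - n₂) * q ^ n₂ = q ^ n₂ := by
      rw [← pow_add]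
      rw [show n₁ - n₂ + n₂ = n₁ by omega, heq']
    exact mul_right_cancel (by rw [this, one_mul])

omit hπ in
lemma W_ker_comm (a b : W r Q) (ha : a.q = 1) (hb : b.q = 1) : a * b = b * a := by
  refine W.ext ?_ ?_
  · show a.m + act a.q b.m = b.m + act b.q a.m
    rw [ha, hb, act_one, act_one, add_comm]
  · show a.q * b.q = b.q * a.q
    rw [ha, hb]

omit hπ in
lemma psi_kills_derived (n : ℕ) (hQ : derivedSeries Q n = ⊥) (w : FreeGroup (Fin r))
    (hw : w ∈ derivedSeries (FreeGroup (Fin r)) (n + 1)) : psi π w = 1 := by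
  have h1 : derivedSeries (W r Q) n ≤ W.proj.ker := by
    have := map_derivedSeries_le_derivedSeries (W.proj (r := r) (Q := Q)) n
    rw [hQ, le_bot_iff, Subgroup.map_eq_bot_iff] at this
    exact this
  have h2 : derivedSeries (W r Q) (n + 1) = ⊥ := by
    rw [derivedSeries_succ, eq_bot_iff]
    rw [Subgroup.commutator_le]
    intro g hg h hh
    rw [Subgroup.mem_bot, commutatorElement_def]
    have hgq : g.q = 1 := h1 hg
    have hhq : h.q = 1 := h1 hh
    rw [W_ker_comm g h hgq hhq]
    group
  have h3 : psi π w ∈ derivedSeries (W r Q) (n + 1) :=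
    map_derivedSeries_le_derivedSeries (psi π) (n + 1) ⟨w, hw, rfl⟩
  rw [h2, Subgroup.mem_bot] at h3
  exact h3

lemma mu_eq_zero_of_mem_commutator (u : FreeGroup (Fin r)) (hu : u ∈ ⁅π.ker, π.ker⁆) :
    mu π u = 0 := by
  have hu' : u ∈ π.ker := by
    have : (⁅π.ker, π.ker⁆ : Subgroup (FreeGroup (Fin r))) ≤ π.ker := by
      rw [Subgroup.commutator_le]
      intro g hg h hh
      exact mul_mem (mul_mem (mul_mem hg hh) (inv_mem hg)) (inv_mem hh)
    exact this hu
  have hmem : (⟨u, hu'⟩ : π.ker) ∈ commutator π.ker := by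
    rw [commutator_def]
    have hmap : Subgroup.map π.ker.subtype ⁅(⊤ : Subgroup π.ker), (⊤ : Subgroup π.ker)⁆ = ⁅π.ker, π.ker⁆ := by
      rw [Subgroup.map_commutator, ← MonoidHom.range_eq_map, Subgroup.range_subtype]
    rw [← hmap] at hu
    obtain ⟨c, hc, hcu⟩ := hu
    have : c = ⟨u, hu'⟩ := Subtype.ext hcu
    rwa [← this]
  have h1 : nu π ⟨u, hu'⟩ = 1 :=
    Abelianization.commutator_subset_ker (nu π) hmem
  have h2 : Multiplicative.ofAdd (mu π u) = 1 := h1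
  have := congrArg Multiplicative.toAdd h2
  simpa using this

lemma mu_pow (w : FreeGroup (Fin r)) (hw : w ∈ π.ker) (n : ℕ) :
    mu π (w ^ n) = n • mu π w := by
  induction n with
  | zero => rw [pow_zero, mu_one, zero_smul]
  | succ n ihn =>
    have hwn : π (w ^ n) = 1 := by
      rw [map_pow, show π w = 1 from hw, one_pow]
    rw [pow_succ, mu_mul, hwn, act_one, ihn, succ_nsmul]

/-- centralizer key step: if a commutes with b modulo relations killed by psi,
and b is a nonzero element of the kernel modulo its commutator, then a lies in the kernel -/
theorem key_commute (htf : ∀ x : Q, ∀ n : ℕ, 0 < n → x ^ n = 1 → x = 1)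
    (a b : FreeGroup (Fin r)) (hb : b ∈ π.ker) (hbn : b ∉ ⁅π.ker, π.ker⁆)
    (hc : psi π (a * b * a⁻¹ * b⁻¹) = 1) : a ∈ π.ker := by
  have h4 : psi π a * psi π b * (psi π a)⁻¹ * (psi π b)⁻¹ = 1 := by
    rw [← map_inv, ← map_inv, ← map_mul, ← map_mul, ← map_mul]
    exact hc
  have h5 : psi π a * psi π b * (psi π a)⁻¹ = psi π b := mul_inv_eq_one.mp h4
  have hAB : psi π a * psi π b = psi π b * psi π a :=
    mul_inv_eq_iff_eq_mul.mp h5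
  have hm : (psi π a * psi π b).m = (psi π b * psi π a).m := by rw [hAB]
  have hbq : (psi π b).q = 1 := by rw [psi_q]; exact hb
  have haq : (psi π a).q = π a := psi_q π a
  rw [W.mul_def, W.mul_def] at hm
  simp only [hbq, haq, act_one] at hm
  -- hm : (psi π a).m + act (π a) (psi π b).m = (psi π b).m + (psi π a).m
  have hfix : act (π a) (mu π b) = mu π b := by
    have : (psi π a).m + act (π a) (mu π b) = (psi π a).m + mu π b := by
      rw [show ((psi π b).m : M r Q) = mu π b from rfl] at hm
      rw [hm, add_comm]
    exact add_left_cancel this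
  have hmb : mu π b ≠ 0 := fun h0 => hbn (magnus_ker π hπ b hb h0)
  obtain ⟨n, hn, hqn⟩ := act_fix_torsion (π a) (mu π b) hmb hfix
  exact htf (π a) n hn hqn

end Tree

section Apply

variable {r : ℕ}

lemma dS_quot_bot (k : ℕ) :
    derivedSeries (FreeGroup (Fin r) ⧸ derivedSeries (FreeGroup (Fin r)) k) k = ⊥ := by
  rw [← map_derivedSeries_eq (QuotientGroup.mk'_surjective
    (derivedSeries (FreeGroup (Fin r)) k)) k, Subgroup.map_eq_bot_iff, QuotientGroup.ker_mk']

lemma dS_succ_le : ∀ k : ℕ, derivedSeries (FreeGroup (Fin r)) (k + 1) ≤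
    derivedSeries (FreeGroup (Fin r)) k := by
  intro k
  rw [derivedSeries_succ, Subgroup.commutator_le]
  intro g hg h hh
  exact mul_mem (mul_mem (mul_mem hg hh) (inv_mem hg)) (inv_mem hh)

lemma tf_quot (k : ℕ) :
    ∀ g : FreeGroup (Fin r) ⧸ derivedSeries (FreeGroup (Fin r)) k,
      ∀ n : ℕ, 0 < n → g ^ n = 1 → g = 1 := by
  induction k with
  | zero =>
    intro g n hn hg
    obtain ⟨w, rfl⟩ := QuotientGroup.mk'_surjective _ g
    exact (QuotientGroup.eq_one_iff w).mpr (by rw [derivedSeries_zero]; trivial)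
  | succ k ih =>
    intro g n hn hg
    obtain ⟨w, rfl⟩ := QuotientGroup.mk'_surjective _ g
    have hπ : Surjective (QuotientGroup.mk' (derivedSeries (FreeGroup (Fin r)) k)) :=
      QuotientGroup.mk'_surjective _
    set π : FreeGroup (Fin r) →* (FreeGroup (Fin r) ⧸ derivedSeries (FreeGroup (Fin r)) k) :=
      QuotientGroup.mk' _ with hπdef
    have hker : π.ker = derivedSeries (FreeGroup (Fin r)) k := QuotientGroup.ker_mk' _
    have hle : derivedSeries (FreeGroup (Fin r)) (k + 1) ≤
        Subgroup.comap (MonoidHom.id _) (derivedSeries (FreeGroup (Fin r)) k) := dS_succ_le k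
    have h1 : (π w) ^ n = 1 := by
      have h1a := congrArg (QuotientGroup.map (derivedSeries (FreeGroup (Fin r)) (k+1))
        (derivedSeries (FreeGroup (Fin r)) k) (MonoidHom.id _) hle) hg
      rw [map_pow, map_one, QuotientGroup.map_mk'] at h1a
      exact h1a
    have hw : w ∈ derivedSeries (FreeGroup (Fin r)) k :=
      (QuotientGroup.eq_one_iff w).mp (ih (π w) n hn h1)
    have hwk : w ∈ π.ker := by rw [hker]; exact hw
    have hwn : w ^ n ∈ ⁅π.ker, π.ker⁆ := by
      rw [hker, ← derivedSeries_succ]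
      have hg' : QuotientGroup.mk' (derivedSeries (FreeGroup (Fin r)) (k + 1)) (w ^ n) = 1 := by
        rw [map_pow]; exact hg
      exact (QuotientGroup.eq_one_iff _).mp hg'
    have h0 : mu π (w ^ n) = 0 := mu_eq_zero_of_mem_commutator π hπ (w ^ n) hwn
    rw [mu_pow π hπ w hwk n] at h0
    have h00 : mu π w = 0 := by
      ext e
      have h3 := congrArg (fun f : M r _ => f e) h0
      simp only [Finsupp.smul_apply, Finsupp.coe_zero, Pi.zero_apply] at h3
      have h4 : (n : ℤ) * (mu π w e) = 0 := by
        rw [← h3, nsmul_eq_mul]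
      rcases mul_eq_zero.mp h4 with h5 | h5
      · exact absurd h5 (by exact_mod_cast hn.ne')
      · simpa using h5
    have hfin : w ∈ derivedSeries (FreeGroup (Fin r)) (k + 1) := by
      have := magnus_ker π hπ w hwk h00
      rwa [hker, ← derivedSeries_succ] at this
    exact (QuotientGroup.eq_one_iff w).mpr hfin

end Apply

end FSG

theorem centralizer_of_nontrivial_element_of_last_derived_term_free_solvable
    (r d : ℕ) (hr : 2 ≤ r) (hd : 2 ≤ d)
    (y : FreeGroup (Fin r) ⧸ derivedSeries (FreeGroup (Fin r)) d)
    (hy : y ∈ derivedSeries (FreeGroup (Fin r) ⧸ derivedSeries (FreeGroup (Fin r)) d) (d - 1))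
    (hne : y ≠ 1) :
    Subgroup.centralizer {y} =
      derivedSeries (FreeGroup (Fin r) ⧸ derivedSeries (FreeGroup (Fin r)) d) (d - 1) := by
  have hk : d - 1 + 1 = d := by omega
  set π : FreeGroup (Fin r) →* (FreeGroup (Fin r) ⧸ derivedSeries (FreeGroup (Fin r)) (d - 1)) :=
    QuotientGroup.mk' _ with hπdef
  have hπ : Function.Surjective π := QuotientGroup.mk'_surjective _
  have hker : π.ker = derivedSeries (FreeGroup (Fin r)) (d - 1) := QuotientGroup.ker_mk' _
  have hcommker : ⁅π.ker, π.ker⁆ = derivedSeries (FreeGroup (Fin r)) d := by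
    rw [hker, ← derivedSeries_succ, hk]
  have hyA := hy
  rw [← map_derivedSeries_eq (QuotientGroup.mk'_surjective
    (derivedSeries (FreeGroup (Fin r)) d)) (d - 1)] at hyA
  obtain ⟨b, hbmem, hb⟩ := hyA
  apply le_antisymm
  · intro z hz
    obtain ⟨a, rfl⟩ := QuotientGroup.mk'_surjective (derivedSeries (FreeGroup (Fin r)) d) z
    have hcomm : y * (QuotientGroup.mk' (derivedSeries (FreeGroup (Fin r)) d) a)
        = (QuotientGroup.mk' (derivedSeries (FreeGroup (Fin r)) d) a) * y :=
      (Subgroup.mem_centralizer_iff.mp hz) y (Set.mem_singleton _)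
    have hone : QuotientGroup.mk' (derivedSeries (FreeGroup (Fin r)) d)
        (a * b * a⁻¹ * b⁻¹) = 1 := by
      rw [map_mul, map_mul, map_mul, map_inv, map_inv, hb, ← hcomm]
      group
    have hcd : a * b * a⁻¹ * b⁻¹ ∈ derivedSeries (FreeGroup (Fin r)) d :=
      (QuotientGroup.eq_one_iff _).mp hone
    have hpsic : FSG.psi π (a * b * a⁻¹ * b⁻¹) = 1 :=
      FSG.psi_kills_derived π (d - 1) (FSG.dS_quot_bot (d - 1)) _ (by rw [hk]; exact hcd)
    have hbker : b ∈ π.ker := by rw [hker]; exact hbmem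
    have hbnc : b ∉ ⁅π.ker, π.ker⁆ := by
      rw [hcommker]
      intro hbc
      exact hne (by rw [← hb]; exact (QuotientGroup.eq_one_iff b).mpr hbc)
    have ha : a ∈ π.ker := FSG.key_commute π hπ (FSG.tf_quot (d - 1)) a b hbker hbnc hpsic
    rw [← map_derivedSeries_eq (QuotientGroup.mk'_surjective
      (derivedSeries (FreeGroup (Fin r)) d)) (d - 1)]
    exact ⟨a, by rw [← hker]; exact ha, rfl⟩
  · intro z hz
    rw [Subgroup.mem_centralizer_iff]
    intro g hg
    rw [Set.mem_singleton_iff] at hg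
    rw [hg]
    have hmem := Subgroup.commutator_mem_commutator hy hz
    rw [← derivedSeries_succ, hk, FSG.dS_quot_bot d, Subgroup.mem_bot] at hmem
    have := commutatorElement_eq_one_iff_commute.mp hmem
    exact this.eq
end
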